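/- arXiv:1906.05751 — 2 statements merged into one kernel-verified Lean document; each statement's English description precedes it below -/
import Mathlib

section
/- For all i, j ∈ {1,2,3} and all n ∈ ℤ with n ≠ 0, one has [x*_{i,n}, x*_{j,0}] = (1/(2n)) Σ_k ε_{ijk} x^k_n as endomorphisms of V. -/
/-!
Bracket each of the three terms of `x*_{i,n}` with `x*_{j,0}`. The `β_{i,n}` term gives
`½ Σ_k ε_{ijk} x^k_n` by (R9). In `Σ ε_{iab} x^a_n W^b` the operator `x*_{j,0}` commutes with every
`x^a_n` (R7) and `[W^b, x*_{j,0}] = δ_{bj}` (R10), giving `-Σ_k ε_{ijk} x^k_n`. The quadratic term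
commutes with `x*_{j,0}`, because on each vector its sum over `m` is a finite sum of products of
`x`'s. Multiplying the total `-½ Σ_k ε_{ijk} x^k_n` by `-1/n` gives the claim.
-/

open Finset

/-- Levi-Civita symbol on `{1,2,3}` (indexed by `Fin 3`). -/
def eps (i j k : Fin 3) : ℤ :=
  (((j : ℤ) - (i : ℤ)) * ((k : ℤ) - (i : ℤ)) * ((k : ℤ) - (j : ℤ))) / 2

variable {V : Type*} [AddCommGroup V] [Module ℂ V]

/-- `x^i_n`: equals the given `x^i_0` for `n = 0`, and `−(1/n) α^i_n` for `n ≠ 0`. -/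
noncomputable def xop (α : Fin 3 → ℤ → Module.End ℂ V) (x0 : Fin 3 → Module.End ℂ V)
    (i : Fin 3) (n : ℤ) : Module.End ℂ V :=
  if n = 0 then x0 i else (-(n : ℂ)⁻¹) • α i n

/-- `P_i = β_{i,0} + Σ_{j,k} ε_{ijk} x^j_0 W^k − ½ Σ_{j,k} ε_{ijk} Σ_{m∈ℤ} m x^j_{−m} x^k_m`,
defined pointwise on vectors (the inner sum has finitely many nonzero terms on each vector). -/
noncomputable def Pop (α β : Fin 3 → ℤ → Module.End ℂ V) (x0 : Fin 3 → Module.End ℂ V)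
    (i : Fin 3) : V → V := fun v =>
  β i 0 v + (∑ j : Fin 3, ∑ k : Fin 3, eps i j k • (x0 j) ((α k 0) v))
    - (2 : ℂ)⁻¹ • ∑ j : Fin 3, ∑ k : Fin 3, eps i j k •
        ∑ᶠ m : ℤ, (m : ℂ) • (xop α x0 j (-m)) ((xop α x0 k m) v)

/-- `x*_{i,n} = −(1/n)(β_{i,n} + Σ_{j,k} ε_{ijk} x^j_n W^k − ½ Σ_{j,k} ε_{ijk} Σ_m m x^j_{n−m} x^k_m)`
for `n ≠ 0`, defined pointwise on vectors. -/
noncomputable def xstarop (α β : Fin 3 → ℤ → Module.End ℂ V) (x0 : Fin 3 → Module.End ℂ V)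
    (i : Fin 3) (n : ℤ) : V → V := fun v =>
  (-(n : ℂ)⁻¹) • (β i n v + (∑ j : Fin 3, ∑ k : Fin 3, eps i j k • (xop α x0 j n) ((α k 0) v))
    - (2 : ℂ)⁻¹ • ∑ j : Fin 3, ∑ k : Fin 3, eps i j k •
        ∑ᶠ m : ℤ, (m : ℂ) • (xop α x0 j (n - m)) ((xop α x0 k m) v))

lemma eps_swap_left (i j k : Fin 3) : eps j i k = -eps i j k := by revert i j k; decide

lemma eps_swap_right (i j k : Fin 3) : eps i k j = -eps i j k := by revert i j k; decide

namespace Module.End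

variable {R M : Type*} [CommRing R] [AddCommGroup M] [Module R M]

lemma apply_apply_of_lie_eq {A B C : Module.End R M} (h : ⁅A, B⁆ = C) (v : M) :
    A (B v) = B (A v) + C v := by
  rw [← h, Ring.lie_def, LinearMap.sub_apply, mul_apply, mul_apply, add_sub_cancel]

lemma apply_apply_comm_of_lie_eq_zero {A B : Module.End R M} (h : ⁅A, B⁆ = 0) (v : M) :
    A (B v) = B (A v) := by
  rw [apply_apply_of_lie_eq h, LinearMap.zero_apply, add_zero]

end Module.End

open Module.End

section

variable {α β : Fin 3 → ℤ → Module.End ℂ V} {x0 xstar0 : Fin 3 → Module.End ℂ V}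

lemma xop_apply_eq_zero {b : Fin 3} {m : ℤ} {w : V} (hm : m ≠ 0) (h : α b m w = 0) :
    xop α x0 b m w = 0 := by
  rw [xop, if_neg hm, LinearMap.smul_apply, h, smul_zero]

lemma lie_alpha_xop_eq_zero (hα : ∀ (i j : Fin 3) (m n : ℤ), ⁅α i m, α j n⁆ = 0)
    (a b : Fin 3) (p : ℤ) {q : ℤ} (hq : q ≠ 0) : ⁅α a p, xop α x0 b q⁆ = 0 := by
  rw [xop, if_neg hq, Ring.lie_def, mul_smul_comm, smul_mul_assoc, ← smul_sub, ← Ring.lie_def, hα,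
    smul_zero]

lemma hasFiniteSupport_smul_xop_xop (hα : ∀ (i j : Fin 3) (m n : ℤ), ⁅α i m, α j n⁆ = 0)
    (hN : ∀ v : V, ∃ N : ℤ, ∀ (i : Fin 3) (n : ℤ), N ≤ n → α i n v = 0)
    (a b : Fin 3) (n : ℤ) (w : V) :
    (fun m : ℤ => (m : ℂ) • xop α x0 a (n - m) (xop α x0 b m w)).HasFiniteSupport := by
  obtain ⟨N, hN⟩ := hN w
  have hN1 : (1 : ℤ) ≤ max N 1 := le_max_right N 1
  have hNN : N ≤ max N 1 := le_max_left N 1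
  -- For `m ≥ N` the factor `x^b_m w` vanishes; for `m ≤ n - N`, `α^a_{n-m}` commutes past
  -- `x^b_m` and kills `w`.
  refine (Set.finite_Ioo (n - max N 1) (max N 1)).subset fun m hm => ?_
  rw [Function.mem_support] at hm
  have hm0 : m ≠ 0 := by rintro rfl; simp at hm
  by_contra hout
  rw [Set.mem_Ioo, not_and_or, not_lt, not_lt] at hout
  apply hm
  rcases hout with hlow | hhigh
  · rw [xop_apply_eq_zero (by omega), smul_zero]
    rw [apply_apply_comm_of_lie_eq_zero (lie_alpha_xop_eq_zero hα a b (n - m) hm0),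
      (hN a (n - m) (by omega)), map_zero]
  · rw [xop_apply_eq_zero hm0 (hN b m (by omega)), map_zero, smul_zero]

lemma finsum_smul_xop_xop_apply_comm (hα : ∀ (i j : Fin 3) (m n : ℤ), ⁅α i m, α j n⁆ = 0)
    (hN : ∀ v : V, ∃ N : ℤ, ∀ (i : Fin 3) (n : ℤ), N ≤ n → α i n v = 0)
    {T : Module.End ℂ V} (hT : ∀ (a : Fin 3) (m : ℤ), ⁅T, xop α x0 a m⁆ = 0)
    (a b : Fin 3) (n : ℤ) (v : V) :
    T (∑ᶠ m : ℤ, (m : ℂ) • xop α x0 a (n - m) (xop α x0 b m v))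
      = ∑ᶠ m : ℤ, (m : ℂ) • xop α x0 a (n - m) (xop α x0 b m (T v)) := by
  rw [map_finsum T (hasFiniteSupport_smul_xop_xop hα hN a b n v)]
  simp only [map_smul, apply_apply_comm_of_lie_eq_zero (hT _ _)]

lemma beta_apply_xstar0 (hβ : ∀ (i j : Fin 3) (n : ℤ),
      ⁅xstar0 i, β j n⁆ = (2 : ℂ)⁻¹ • ∑ k : Fin 3, eps i j k • xop α x0 k n)
    (i j : Fin 3) (n : ℤ) (v : V) :
    β i n (xstar0 j v)
      = xstar0 j (β i n v) + (2 : ℂ)⁻¹ • ∑ k : Fin 3, eps i j k • xop α x0 k n v := by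
  have h := apply_apply_of_lie_eq (hβ j i n) v
  simp only [eps_swap_left i j, neg_smul, Finset.sum_neg_distrib, smul_neg, LinearMap.neg_apply,
    LinearMap.smul_apply, LinearMap.sum_apply] at h
  rw [h, neg_add_cancel_right]

lemma sum_eps_xop_alpha_zero_apply_xstar0
    (hx : ∀ (i j : Fin 3) (n : ℤ), ⁅xstar0 i, xop α x0 j n⁆ = 0)
    (hW : ∀ (i j : Fin 3) (m : ℤ), ⁅α j m, xstar0 i⁆
      = if i = j ∧ m = 0 then (1 : Module.End ℂ V) else 0)
    (i j : Fin 3) (n : ℤ) (v : V) :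
    ∑ a : Fin 3, ∑ b : Fin 3, eps i a b • xop α x0 a n (α b 0 (xstar0 j v))
      = xstar0 j (∑ a : Fin 3, ∑ b : Fin 3, eps i a b • xop α x0 a n (α b 0 v))
        - ∑ k : Fin 3, eps i j k • xop α x0 k n v := by
  have hWx : ∀ b, α b 0 (xstar0 j v) = xstar0 j (α b 0 v) + if j = b then v else 0 := by
    intro b
    rw [apply_apply_of_lie_eq (hW j b 0) v]
    split_ifs <;> simp_all
  have hδ : ∀ a, ∑ b : Fin 3, eps i a b • xop α x0 a n (if j = b then v else 0)
      = eps i a j • xop α x0 a n v := by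
    intro a
    refine (Fintype.sum_eq_single j fun b hb => ?_).trans (by simp)
    simp [Ne.symm hb]
  simp only [hWx, map_add, smul_add, Finset.sum_add_distrib, hδ, map_sum, map_zsmul,
    apply_apply_comm_of_lie_eq_zero (hx _ _ _), eps_swap_right i j, neg_smul,
    Finset.sum_neg_distrib, sub_eq_add_neg]

end

theorem xstar_xstar0_commutator_general
    (α β : Fin 3 → ℤ → Module.End ℂ V) (x0 xstar0 : Fin 3 → Module.End ℂ V)
    (R1 : ∀ (i j : Fin 3) (m n : ℤ), ⁅α i m, α j n⁆ = 0)
    (R4 : ∀ v : V, ∃ N : ℤ, ∀ (i : Fin 3) (n : ℤ), N ≤ n → α i n v = 0 ∧ β i n v = 0)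
    (R7 : ∀ (i j : Fin 3) (n : ℤ), ⁅xstar0 i, xop α x0 j n⁆ = 0)
    (R9 : ∀ (i j : Fin 3) (n : ℤ), ⁅xstar0 i, β j n⁆
      = (2 : ℂ)⁻¹ • ∑ k : Fin 3, eps i j k • xop α x0 k n)
    (R10 : ∀ (i j : Fin 3) (m : ℤ), ⁅α j m, xstar0 i⁆
      = if i = j ∧ m = 0 then (1 : Module.End ℂ V) else 0)
    (i j : Fin 3) (n : ℤ) (v : V) :
    xstarop α β x0 i n (xstar0 j v) - xstar0 j (xstarop α β x0 i n v)
      = ((2 * n : ℂ))⁻¹ • ∑ k : Fin 3, eps i j k • (xop α x0 k n) v := by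
  have hN v : ∃ N : ℤ, ∀ (i : Fin 3) (n : ℤ), N ≤ n → α i n v = 0 :=
    (R4 v).imp fun _ h i n hn => (h i n hn).1
  simp only [xstarop, beta_apply_xstar0 R9, sum_eps_xop_alpha_zero_apply_xstar0 R7 R10,
    ← finsum_smul_xop_xop_apply_comm R1 hN (R7 j)]
  simp only [map_smul, map_sub, map_add, map_sum, map_zsmul]
  match_scalars <;> ring

/-- `[x*_{i,n}, x*_{j,0}] = (1/(2n)) Σ_k ε_{ijk} x^k_n` for `n ≠ 0`
(as endomorphisms, checked pointwise). -/
theorem xstar_xstar0_commutator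
    (α β : Fin 3 → ℤ → Module.End ℂ V) (x0 xstar0 : Fin 3 → Module.End ℂ V)
    (R1 : ∀ (i j : Fin 3) (m n : ℤ), ⁅α i m, α j n⁆ = 0)
    (R2 : ∀ (i j : Fin 3) (m n : ℤ), ⁅β i m, α j n⁆
      = if i = j ∧ m + n = 0 then (m : ℂ) • (1 : Module.End ℂ V) else 0)
    (R3 : ∀ (i j : Fin 3) (m n : ℤ), ⁅β i m, β j n⁆ = ∑ k : Fin 3, eps i j k • α k (m + n))
    (R4 : ∀ v : V, ∃ N : ℤ, ∀ (i : Fin 3) (n : ℤ), N ≤ n → α i n v = 0 ∧ β i n v = 0)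
    (R5a : ∀ (i j : Fin 3) (n : ℤ), ⁅α j n, x0 i⁆ = 0)
    (R5b : ∀ i j : Fin 3, ⁅x0 i, x0 j⁆ = 0)
    (R6 : ∀ (i j : Fin 3) (n : ℤ), ⁅β j n, x0 i⁆
      = if i = j ∧ n = 0 then (1 : Module.End ℂ V) else 0)
    (R7 : ∀ (i j : Fin 3) (n : ℤ), ⁅xstar0 i, xop α x0 j n⁆ = 0)
    (R8 : ∀ i j : Fin 3, ⁅xstar0 i, xstar0 j⁆ = 0)
    (R9 : ∀ (i j : Fin 3) (n : ℤ), ⁅xstar0 i, β j n⁆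
      = (2 : ℂ)⁻¹ • ∑ k : Fin 3, eps i j k • xop α x0 k n)
    (R10 : ∀ (i j : Fin 3) (m : ℤ), ⁅α j m, xstar0 i⁆
      = if i = j ∧ m = 0 then (1 : Module.End ℂ V) else 0)
    (i j : Fin 3) (n : ℤ) (hn : n ≠ 0) (v : V) :
    xstarop α β x0 i n (xstar0 j v) - xstar0 j (xstarop α β x0 i n v)
      = ((2 * n : ℂ))⁻¹ • ∑ k : Fin 3, eps i j k • (xop α x0 k n) v :=
  xstar_xstar0_commutator_general α β x0 xstar0 R1 R4 R7 R9 R10 i j n v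
end

section
/- For all i, j ∈ {1,2,3} and all m ∈ ℤ: (i) [α^j_m, x*_{i,n}] = δ_{ij} δ_{m,−n} (as a scalar multiple of the identity) for every n ∈ ℤ with n ≠ 0; and (ii) [α^j_m, P_i] = 0. -/
open Finset

variable {V : Type*} [AddCommGroup V] [Module ℂ V]

/-!
Apart from `β_{i,n}`, every operator occurring in `x*_{i,n}` and `P_i` is built from the `α`'s
and the `x_0`'s, which all commute with `α^j_m`. On a fixed vector the normally ordered sums are
finite (`R4`, moved past the other factor by `R1`, `R5`), so `α^j_m` passes through them as
well. Hence `[α^j_m, x*_{i,n}] = −(1/n)[α^j_m, β_{i,n}]` and `[α^j_m, P_i] = [α^j_m, β_{i,0}]`,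
which `R2` evaluates to `δ_{ij} δ_{m,−n}` and `0`.
-/

theorem Commute.apply_apply {R M : Type*} [Semiring R] [AddCommMonoid M]
    [Module R M] {f g : Module.End R M} (h : Commute f g) (v : M) : f (g v) = g (f v) :=
  LinearMap.congr_fun h.eq v

theorem Module.End.lie_apply_eq_sub {R M : Type*} [CommRing R] [AddCommGroup M] [Module R M]
    (f g : Module.End R M) (v : M) : ⁅f, g⁆ v = f (g v) - g (f v) := by
  rw [Ring.lie_def]
  rfl

section

variable (α β : Fin 3 → ℤ → Module.End ℂ V) (x0 : Fin 3 → Module.End ℂ V)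

theorem commute_xop {f : Module.End ℂ V} (hα : ∀ a p, Commute f (α a p))
    (hx : ∀ a, Commute f (x0 a)) (a : Fin 3) (n : ℤ) : Commute f (xop α x0 a n) := by
  unfold xop
  split_ifs
  · exact hx a
  · exact (hα a n).smul_right _

theorem xop_apply_eq_zero_s11 {a : Fin 3} {n : ℤ} {v : V} (hn : n ≠ 0) (h : α a n v = 0) :
    xop α x0 a n v = 0 := by
  simp [xop, hn, h]

theorem hasFiniteSupport_xop_xop (hα : ∀ a p b q, Commute (α a p) (α b q))
    (hx : ∀ a p b, Commute (α a p) (x0 b)) {v : V} {N : ℤ}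
    (hN : ∀ a n, N ≤ n → α a n v = 0) (a b : Fin 3) (n : ℤ) :
    (fun m : ℤ => (m : ℂ) • xop α x0 a (n - m) (xop α x0 b m v)).HasFiniteSupport := by
  refine (Set.finite_Ioo (n - max N 1) (max N 1)).subset fun m hm => ?_
  rw [Function.mem_support] at hm
  by_contra hout
  rw [Set.mem_Ioo, not_and_or, not_lt, not_lt] at hout
  apply hm
  rcases hout with hlow | hhigh
  · have hkill : α a (n - m) (xop α x0 b m v) = 0 := by
      rw [(commute_xop α x0 (hα a (n - m)) (hx a (n - m)) b m).apply_apply,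
        hN a (n - m) (by omega), map_zero]
    rw [xop_apply_eq_zero_s11 α x0 (by omega) hkill, smul_zero]
  · rw [xop_apply_eq_zero_s11 α x0 (by omega) (hN b m (by omega)), map_zero, smul_zero]

variable {α β x0} {f : Module.End ℂ V}

theorem apply_finsum_xop_xop (hα : ∀ a p, Commute f (α a p)) (hx : ∀ a, Commute f (x0 a))
    {v : V} {a b : Fin 3} {n : ℤ}
    (hfin : (fun m : ℤ => (m : ℂ) • xop α x0 a (n - m) (xop α x0 b m v)).HasFiniteSupport) :
    f (∑ᶠ m : ℤ, (m : ℂ) • xop α x0 a (n - m) (xop α x0 b m v))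
      = ∑ᶠ m : ℤ, (m : ℂ) • xop α x0 a (n - m) (xop α x0 b m (f v)) := by
  rw [map_finsum f hfin]
  refine finsum_congr fun m => ?_
  rw [map_smul, (commute_xop α x0 hα hx a _).apply_apply,
    (commute_xop α x0 hα hx b m).apply_apply]

theorem apply_xstarop (hα : ∀ a p, Commute f (α a p)) (hx : ∀ a, Commute f (x0 a)) (i : Fin 3)
    {v : V} {n : ℤ}
    (hfin : ∀ a b,
      (fun m : ℤ => (m : ℂ) • xop α x0 a (n - m) (xop α x0 b m v)).HasFiniteSupport) :
    f (xstarop α β x0 i n v)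
      = xstarop α β x0 i n (f v) + (-(n : ℂ)⁻¹) • (f (β i n v) - β i n (f v)) := by
  have hfα : ∀ a p w, f (α a p w) = α a p (f w) := fun a p => (hα a p).apply_apply
  have hfxop : ∀ a p w, f (xop α x0 a p w) = xop α x0 a p (f w) := fun a p =>
    (commute_xop α x0 hα hx a p).apply_apply
  have hfsum := fun a b => apply_finsum_xop_xop hα hx (hfin a b)
  simp only [xstarop, map_smul, map_sub, map_add, map_sum, map_zsmul, hfα, hfxop, hfsum]
  rw [← smul_add]
  congr 1
  abel

theorem apply_Pop (hα : ∀ a p, Commute f (α a p)) (hx : ∀ a, Commute f (x0 a)) (i : Fin 3)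
    {v : V}
    (hfin : ∀ a b,
      (fun m : ℤ => (m : ℂ) • xop α x0 a (0 - m) (xop α x0 b m v)).HasFiniteSupport) :
    f (Pop α β x0 i v) = Pop α β x0 i (f v) + (f (β i 0 v) - β i 0 (f v)) := by
  have hfα : ∀ a p w, f (α a p w) = α a p (f w) := fun a p => (hα a p).apply_apply
  have hfx : ∀ a w, f (x0 a w) = x0 a (f w) := fun a => (hx a).apply_apply
  have hfsum : ∀ a b, f (∑ᶠ m : ℤ, (m : ℂ) • xop α x0 a (-m) (xop α x0 b m v))
      = ∑ᶠ m : ℤ, (m : ℂ) • xop α x0 a (-m) (xop α x0 b m (f v)) := fun a b => by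
    simpa only [zero_sub] using apply_finsum_xop_xop hα hx (hfin a b)
  simp only [Pop, map_sub, map_add, map_smul, map_sum, map_zsmul, hfα, hfx, hfsum]
  abel

end

theorem alpha_xstar_P_commutators_general
    (α β : Fin 3 → ℤ → Module.End ℂ V) (x0 : Fin 3 → Module.End ℂ V)
    (R1 : ∀ (i j : Fin 3) (m n : ℤ), ⁅α i m, α j n⁆ = 0)
    (R2 : ∀ (i j : Fin 3) (m n : ℤ), ⁅β i m, α j n⁆
      = if i = j ∧ m + n = 0 then (m : ℂ) • (1 : Module.End ℂ V) else 0)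
    (R4 : ∀ v : V, ∃ N : ℤ, ∀ (i : Fin 3) (n : ℤ), N ≤ n → α i n v = 0 ∧ β i n v = 0)
    (R5a : ∀ (i j : Fin 3) (n : ℤ), ⁅α j n, x0 i⁆ = 0)
    (i j : Fin 3) (m : ℤ) :
    (∀ (n : ℤ), n ≠ 0 → ∀ v : V,
      (α j m) (xstarop α β x0 i n v) - xstarop α β x0 i n ((α j m) v)
        = if i = j ∧ m + n = 0 then v else 0) ∧
    (∀ v : V, (α j m) (Pop α β x0 i v) - Pop α β x0 i ((α j m) v) = 0) := by
  have hαα : ∀ a p b q, Commute (α a p) (α b q) := fun a p b q =>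
    commute_iff_lie_eq.mpr (R1 a b p q)
  have hαx : ∀ a p b, Commute (α a p) (x0 b) := fun a p b => commute_iff_lie_eq.mpr (R5a b a p)
  have hfin : ∀ v n a b,
      (fun k : ℤ => (k : ℂ) • xop α x0 a (n - k) (xop α x0 b k v)).HasFiniteSupport := by
    intro v n a b
    obtain ⟨N, hN⟩ := R4 v
    exact hasFiniteSupport_xop_xop α x0 hαα hαx (fun a n h => (hN a n h).1) a b n
  have hβ : ∀ n v, α j m (β i n v) - β i n (α j m v)
      = -(if i = j ∧ n + m = 0 then (n : ℂ) • v else 0) := fun n v => by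
    rw [← neg_sub, ← Module.End.lie_apply_eq_sub, R2]
    split_ifs <;> simp
  refine ⟨fun n hn v => ?_, fun v => ?_⟩
  · rw [apply_xstarop (hαα j m) (hαx j m) i (hfin v n), add_sub_cancel_left, hβ]
    by_cases hij : i = j ∧ m + n = 0
    · rw [if_pos ⟨hij.1, by omega⟩, if_pos hij, smul_neg, neg_smul, neg_neg, smul_smul,
        inv_mul_cancel₀ (by exact_mod_cast hn), one_smul]
    · rw [if_neg fun h => hij ⟨h.1, by omega⟩, if_neg hij, neg_zero, smul_zero]
  · rw [apply_Pop (hαα j m) (hαx j m) i (hfin v 0), add_sub_cancel_left, hβ]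
    simp

/-- (i) `[α^j_m, x*_{i,n}] = δ_{ij} δ_{m,−n}` (a scalar multiple of the identity) for
`n ≠ 0`; (ii) `[α^j_m, P_i] = 0` (as endomorphisms, checked pointwise). -/
theorem alpha_xstar_P_commutators
    (α β : Fin 3 → ℤ → Module.End ℂ V) (x0 : Fin 3 → Module.End ℂ V)
    (R1 : ∀ (i j : Fin 3) (m n : ℤ), ⁅α i m, α j n⁆ = 0)
    (R2 : ∀ (i j : Fin 3) (m n : ℤ), ⁅β i m, α j n⁆
      = if i = j ∧ m + n = 0 then (m : ℂ) • (1 : Module.End ℂ V) else 0)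
    (R3 : ∀ (i j : Fin 3) (m n : ℤ), ⁅β i m, β j n⁆ = ∑ k : Fin 3, eps i j k • α k (m + n))
    (R4 : ∀ v : V, ∃ N : ℤ, ∀ (i : Fin 3) (n : ℤ), N ≤ n → α i n v = 0 ∧ β i n v = 0)
    (R5a : ∀ (i j : Fin 3) (n : ℤ), ⁅α j n, x0 i⁆ = 0)
    (R5b : ∀ i j : Fin 3, ⁅x0 i, x0 j⁆ = 0)
    (R6 : ∀ (i j : Fin 3) (n : ℤ), ⁅β j n, x0 i⁆
      = if i = j ∧ n = 0 then (1 : Module.End ℂ V) else 0)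
    (i j : Fin 3) (m : ℤ) :
    (∀ (n : ℤ), n ≠ 0 → ∀ v : V,
      (α j m) (xstarop α β x0 i n v) - xstarop α β x0 i n ((α j m) v)
        = if i = j ∧ m + n = 0 then v else 0) ∧
    (∀ v : V, (α j m) (Pop α β x0 i v) - Pop α β x0 i ((α j m) v) = 0) :=
  alpha_xstar_P_commutators_general α β x0 R1 R2 R4 R5a i j m
end
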